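/- For every fixed r ≥ 3 and any sequence λ_n := C(n−1,k−1)p_n with λ_n → λ ∈ (0,∞), the expected number of star-collisions of support size r in H(n,k,p_n) is O(n^{2−r}), and hence P(X_r ≥ 1) → 0. -/

import Mathlib

/-- All `k`-element subsets of `[n]`, the possible hyperedges of a `k`-uniform
hypergraph on `n` vertices. -/
def kSets (n k : ℕ) : Finset (Finset (Fin n)) :=
  (Finset.univ : Finset (Fin n)).powersetCard k

/-- The probability, in the random hypergraph `H(n,k,p)` where each `k`-subset is a
hyperedge independently with probability `p`, of a given edge set `E`. -/
noncomputable def hweight (n k : ℕ) (p : ℝ) (E : Finset (Finset (Fin n))) : ℝ :=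
  if E ⊆ kSets n k then p ^ E.card * (1 - p) ^ ((kSets n k).card - E.card) else 0

open Classical in
/-- The probability of an event `A` under `H(n,k,p)`. -/
noncomputable def hprob (n k : ℕ) (p : ℝ) (A : Finset (Finset (Fin n)) → Prop) : ℝ :=
  ∑ E : Finset (Finset (Fin n)), if A E then hweight n k p E else 0

/-- The expectation of a random variable `f` under `H(n,k,p)`. -/
noncomputable def hexp (n k : ℕ) (p : ℝ) (f : Finset (Finset (Fin n)) → ℝ) : ℝ :=
  ∑ E : Finset (Finset (Fin n)), hweight n k p E * f E

/-- The star of a vertex `v`: the set of hyperedges of `E` containing `v`. -/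
def hstar {n : ℕ} (E : Finset (Finset (Fin n))) (v : Fin n) : Finset (Finset (Fin n)) :=
  E.filter (fun e => v ∈ e)

/-- `X_r`: the number of unordered pairs of (distinct) vertices with identical stars of
size exactly `r` (star-collisions of support size `r`). -/
def Xr (n r : ℕ) (E : Finset (Finset (Fin n))) : ℕ :=
  ((Finset.univ : Finset (Fin n)).powersetCard 2 |>.filter
    (fun P => (∀ u ∈ P, ∀ v ∈ P, hstar E u = hstar E v) ∧
      ∀ u ∈ P, (hstar E u).card = r)).card

open Filter Asymptotics

/-!
By linearity, `E[X_r]` is a sum over the `C(n,2)` vertex pairs. If `u` and `v` have the same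
star of size `r`, that star is an `r`-set of edges each containing both `u` and `v`; there are
only `C(n-2,k-2)` such edges, so a union bound over these `r`-sets bounds the probability of a
collision at `{u,v}` by `(C(n-2,k-2) p)^r`. Since `(n-1) C(n-2,k-2) = (k-1) C(n-1,k-1)`, we have
`C(n-2,k-2) p_n = (k-1) λ_n / (n-1) = O(1/n)`, hence `E[X_r] = O(n^2 n^{-r})`, and Markov's
inequality gives `P(X_r ≥ 1) → 0`.
-/

open Finset

section RandomHypergraph

variable {n k : ℕ} {p : ℝ}

lemma hweight_nonneg (hp0 : 0 ≤ p) (hp1 : p ≤ 1) (E : Finset (Finset (Fin n))) :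
    0 ≤ hweight n k p E := by
  unfold hweight
  split_ifs
  · exact mul_nonneg (pow_nonneg hp0 _) (pow_nonneg (sub_nonneg.2 hp1) _)
  · exact le_rfl

lemma hexp_nonneg (hp0 : 0 ≤ p) (hp1 : p ≤ 1) {f : Finset (Finset (Fin n)) → ℝ}
    (hf : ∀ E, 0 ≤ f E) : 0 ≤ hexp n k p f :=
  sum_nonneg fun E _ => mul_nonneg (hweight_nonneg hp0 hp1 E) (hf E)

lemma hexp_mono (hp0 : 0 ≤ p) (hp1 : p ≤ 1) {f g : Finset (Finset (Fin n)) → ℝ}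
    (hfg : ∀ E ⊆ kSets n k, f E ≤ g E) : hexp n k p f ≤ hexp n k p g := by
  refine sum_le_sum fun E _ => ?_
  by_cases hE : E ⊆ kSets n k
  · exact mul_le_mul_of_nonneg_left (hfg E hE) (hweight_nonneg hp0 hp1 E)
  · simp [hweight, hE]

lemma hexp_sum {ι : Type*} (s : Finset ι) (f : ι → Finset (Finset (Fin n)) → ℝ) :
    hexp n k p (fun E => ∑ i ∈ s, f i E) = ∑ i ∈ s, hexp n k p (f i) := by
  simp only [hexp, mul_sum]
  exact sum_comm

lemma hprob_eq_hexp (A : Finset (Finset (Fin n)) → Prop) [DecidablePred A] :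
    hprob n k p A = hexp n k p (fun E => if A E then 1 else 0) := by
  refine sum_congr rfl fun E _ => ?_
  by_cases h : A E <;> simp [h]

lemma hprob_nonneg (hp0 : 0 ≤ p) (hp1 : p ≤ 1) (A : Finset (Finset (Fin n)) → Prop) :
    0 ≤ hprob n k p A := by
  classical
  rw [hprob_eq_hexp]
  exact hexp_nonneg hp0 hp1 fun E => by positivity

lemma hprob_one_le_le_hexp (hp0 : 0 ≤ p) (hp1 : p ≤ 1) (X : Finset (Finset (Fin n)) → ℕ) :
    hprob n k p (fun E => 1 ≤ X E) ≤ hexp n k p (fun E => (X E : ℝ)) := by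
  classical
  rw [hprob_eq_hexp]
  refine hexp_mono hp0 hp1 fun E _ => ?_
  split_ifs with h
  · exact_mod_cast h
  · positivity

lemma hprob_le_sum_hprob_subset (hp0 : 0 ≤ p) (hp1 : p ≤ 1)
    (A : Finset (Finset (Fin n)) → Prop) (T : Finset (Finset (Finset (Fin n))))
    (hT : ∀ E ⊆ kSets n k, A E → ∃ S ∈ T, S ⊆ E) :
    hprob n k p A ≤ ∑ S ∈ T, hprob n k p (S ⊆ ·) := by
  classical
  simp only [hprob_eq_hexp, ← hexp_sum]
  refine hexp_mono hp0 hp1 fun E hE => ?_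
  have hind : ∀ S ∈ T, (0 : ℝ) ≤ if S ⊆ E then 1 else 0 := fun S _ => by positivity
  split_ifs with hA
  · obtain ⟨S, hS, hSE⟩ := hT E hE hA
    calc (1 : ℝ) = if S ⊆ E then 1 else 0 := (if_pos hSE).symm
      _ ≤ _ := single_le_sum hind hS
  · exact sum_nonneg hind

lemma hprob_subset_eq_pow {S : Finset (Finset (Fin n))} (hS : S ⊆ kSets n k) :
    hprob n k p (S ⊆ ·) = p ^ #S := by
  classical
  set K := kSets n k
  have hIcc : hprob n k p (S ⊆ ·) = ∑ E ∈ Icc S K, p ^ #E * (1 - p) ^ (#K - #E) := by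
    rw [← univ_inter (Icc S K), ← sum_ite_mem]
    refine sum_congr rfl fun E _ => ?_
    by_cases hSE : S ⊆ E <;> by_cases hEK : E ⊆ K <;> simp [hweight, K, hSE, hEK]
  have hinj : Set.InjOn (S ∪ ·) ↑(K \ S).powerset := fun a ha b hb hab => by
    simp only [coe_powerset, Set.mem_preimage, Set.mem_powerset_iff, coe_subset] at ha hb
    rw [← union_sdiff_cancel_left (disjoint_sdiff.mono_right ha),
      ← union_sdiff_cancel_left (disjoint_sdiff.mono_right hb)]
    exact congrArg (· \ S) hab
  rw [hIcc, Icc_eq_image_powerset hS, sum_image hinj]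
  calc ∑ T ∈ (K \ S).powerset, p ^ #(S ∪ T) * (1 - p) ^ (#K - #(S ∪ T))
      = ∑ T ∈ (K \ S).powerset, p ^ #S * (p ^ #T * (1 - p) ^ (#(K \ S) - #T)) := by
        refine sum_congr rfl fun T hT => ?_
        rw [card_union_of_disjoint (disjoint_sdiff.mono_right (mem_powerset.1 hT)),
          card_sdiff_of_subset hS, pow_add, mul_assoc, Nat.sub_sub]
    _ = p ^ #S := by rw [← mul_sum, sum_pow_mul_eq_add_pow]; simp

end RandomHypergraph

section StarCollision

variable {n k : ℕ} {p : ℝ}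

def IsStarCollision (r : ℕ) (E : Finset (Finset (Fin n))) (P : Finset (Fin n)) : Prop :=
  (∀ u ∈ P, ∀ v ∈ P, hstar E u = hstar E v) ∧ ∀ u ∈ P, #(hstar E u) = r

lemma hexp_Xr (r : ℕ) :
    hexp n k p (fun E => (Xr n r E : ℝ))
      = ∑ P ∈ univ.powersetCard 2, hprob n k p (fun E => IsStarCollision r E P) := by
  classical
  simp only [hprob_eq_hexp, ← hexp_sum]
  congr 1
  funext E
  rw [Xr, card_filter]
  push_cast
  exact sum_congr rfl fun P _ => by unfold IsStarCollision; congr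

lemma hstar_mem_powersetCard {r : ℕ} {E : Finset (Finset (Fin n))} (hE : E ⊆ kSets n k)
    {P : Finset (Fin n)} (hP : IsStarCollision r E P) {u : Fin n} (hu : u ∈ P) :
    hstar E u ∈ ((kSets n k).filter (P ⊆ ·)).powersetCard r := by
  refine mem_powersetCard.2 ⟨fun e he => ?_, hP.2 u hu⟩
  have heE : e ∈ E := (mem_filter.1 he).1
  refine mem_filter.2 ⟨hE heE, fun w hw => ?_⟩
  rw [hP.1 u hu w hw] at he
  exact (mem_filter.1 he).2

lemma hprob_isStarCollision_le (hp0 : 0 ≤ p) (hp1 : p ≤ 1) (r : ℕ) {P : Finset (Fin n)}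
    (hP : P.Nonempty) (hPk : #P ≤ k) :
    hprob n k p (fun E => IsStarCollision r E P)
      ≤ (((n - #P).choose (k - #P) : ℝ) * p) ^ r := by
  classical
  obtain ⟨u, hu⟩ := hP
  set D := (kSets n k).filter (P ⊆ ·)
  have hD : #D = (n - #P).choose (k - #P) := by
    change #((univ.powersetCard k).filter (P ⊆ ·)) = _
    rw [card_filter_powersetCard_subset P univ k (subset_univ P) hPk, card_univ, Fintype.card_fin]
  calc hprob n k p (fun E => IsStarCollision r E P)
      ≤ ∑ S ∈ D.powersetCard r, hprob n k p (S ⊆ ·) :=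
        hprob_le_sum_hprob_subset hp0 hp1 _ _ fun E hE hEP =>
          ⟨hstar E u, hstar_mem_powersetCard hE hEP hu, filter_subset _ _⟩
    _ = (#D).choose r * p ^ r := by
        have hS : ∀ S ∈ D.powersetCard r, hprob n k p (S ⊆ ·) = p ^ r := fun S hS => by
          rw [mem_powersetCard] at hS
          rw [hprob_subset_eq_pow (hS.1.trans (filter_subset _ _)), hS.2]
        rw [sum_congr rfl hS, sum_const, card_powersetCard, nsmul_eq_mul]
    _ ≤ (#D : ℝ) ^ r * p ^ r := by
        gcongr
        exact_mod_cast Nat.choose_le_pow _ _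
    _ = _ := by rw [hD, mul_pow]

lemma hexp_Xr_le (hk : 2 ≤ k) (hp0 : 0 ≤ p) (hp1 : p ≤ 1) (r : ℕ) :
    hexp n k p (fun E => (Xr n r E : ℝ))
      ≤ (n : ℝ) ^ 2 * (((n - 2).choose (k - 2) : ℝ) * p) ^ r := by
  rw [hexp_Xr]
  calc ∑ P ∈ univ.powersetCard 2, hprob n k p (fun E => IsStarCollision r E P)
      ≤ ∑ _P ∈ univ.powersetCard 2, (((n - 2).choose (k - 2) : ℝ) * p) ^ r := by
        refine sum_le_sum fun P hP => ?_
        have hP2 : #P = 2 := (mem_powersetCard.1 hP).2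
        have := hprob_isStarCollision_le hp0 hp1 r (card_pos.1 (by omega)) (hP2 ▸ hk)
        rwa [hP2] at this
    _ ≤ (n : ℝ) ^ 2 * (((n - 2).choose (k - 2) : ℝ) * p) ^ r := by
        rw [sum_const, card_powersetCard, card_univ, Fintype.card_fin, nsmul_eq_mul]
        gcongr
        exact_mod_cast Nat.choose_le_pow n 2

end StarCollision

lemma sub_one_mul_choose_sub_two {k : ℕ} (hk : 2 ≤ k) (n : ℕ) :
    (n - 1) * (n - 2).choose (k - 2) = (n - 1).choose (k - 1) * (k - 1) := by
  obtain ⟨j, rfl⟩ := Nat.exists_eq_add_of_le' hk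
  rcases n with _ | _ | m
  · simp
  · simp
  · simpa using Nat.add_one_mul_choose_eq m j

lemma isBigO_choose_sub_two_mul {k : ℕ} (hk : 2 ≤ k) {p : ℕ → ℝ} {lam : ℝ}
    (hlam : Tendsto (fun n => ((n - 1).choose (k - 1) : ℝ) * p n) atTop (nhds lam)) :
    (fun n => ((n - 2).choose (k - 2) : ℝ) * p n) =O[atTop] fun n => (n : ℝ)⁻¹ := by
  have heq : (fun n => ((n - 2).choose (k - 2) : ℝ) * p n) =ᶠ[atTop]
      fun n => ((k - 1 : ℕ) : ℝ) * (((n - 1).choose (k - 1) : ℝ) * p n)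
        * ((n - 1 : ℕ) : ℝ)⁻¹ := by
    filter_upwards [eventually_ge_atTop 2] with n hn
    have hn1 : ((n - 1 : ℕ) : ℝ) ≠ 0 := by norm_cast; omega
    have hid : ((n - 1 : ℕ) : ℝ) * (n - 2).choose (k - 2)
        = (n - 1).choose (k - 1) * (k - 1 : ℕ) := by
      exact_mod_cast sub_one_mul_choose_sub_two hk n
    field_simp
    linear_combination p n * hid
  have hinv : (fun n : ℕ => ((n - 1 : ℕ) : ℝ)⁻¹) =O[atTop] fun n => (n : ℝ)⁻¹ := by
    refine IsBigO.inv_rev (IsBigO.of_bound 2 ?_) (Eventually.of_forall fun n h => by simp_all)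
    filter_upwards [eventually_ge_atTop 2] with n hn
    have hn' : (2 : ℝ) ≤ n := by exact_mod_cast hn
    rw [Real.norm_natCast, Real.norm_natCast, Nat.cast_sub (by omega), Nat.cast_one]
    linarith
  simpa using heq.trans_isBigO (((hlam.const_mul _).isBigO_one ℝ).mul hinv)

lemma sq_mul_inv_pow_eq_rpow (r : ℕ) {x : ℝ} (hx : 0 < x) :
    x ^ 2 * x⁻¹ ^ r = x ^ ((2 : ℝ) - r) := by
  rw [Real.rpow_sub hx, inv_pow, ← div_eq_mul_inv]
  norm_cast

theorem stmt18_general (k : ℕ) (hk : 2 ≤ k) (r : ℕ) (hr : 3 ≤ r) (lam : ℝ)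
    (p : ℕ → ℝ) (hp : ∀ᶠ n in atTop, 0 ≤ p n ∧ p n ≤ 1)
    (hlam : Tendsto (fun n => ((n - 1).choose (k - 1) : ℝ) * p n) atTop (nhds lam)) :
    (fun n => hexp n k (p n) (fun E => (Xr n r E : ℝ)))
        =O[atTop] (fun n => (n : ℝ) ^ ((2 : ℝ) - r))
    ∧ Tendsto (fun n => hprob n k (p n) (fun E => 1 ≤ Xr n r E)) atTop (nhds 0) := by
  have hbound : (fun n => hexp n k (p n) (fun E => (Xr n r E : ℝ)))
      =O[atTop] fun n => (n : ℝ) ^ 2 * (((n - 2).choose (k - 2) : ℝ) * p n) ^ r := by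
    refine IsBigO.of_bound' ?_
    filter_upwards [hp] with n ⟨hp0, hp1⟩
    rw [Real.norm_of_nonneg (hexp_nonneg hp0 hp1 fun E => Nat.cast_nonneg _)]
    exact (hexp_Xr_le hk hp0 hp1 r).trans (le_abs_self _)
  have hrate : (fun n : ℕ => (n : ℝ) ^ 2 * (n : ℝ)⁻¹ ^ r)
      =ᶠ[atTop] fun n => (n : ℝ) ^ ((2 : ℝ) - r) := by
    filter_upwards [eventually_gt_atTop 0] with n hn
    exact sq_mul_inv_pow_eq_rpow r (Nat.cast_pos.2 hn)
  have hO := hbound.trans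
    (((isBigO_refl _ _).mul ((isBigO_choose_sub_two_mul hk hlam).pow r)).trans_eventuallyEq hrate)
  have hlim : Tendsto (fun n : ℕ => (n : ℝ) ^ ((2 : ℝ) - r)) atTop (nhds 0) := by
    have hr' : (0 : ℝ) < r - 2 := by
      have : (3 : ℝ) ≤ r := by exact_mod_cast hr
      linarith
    have h := (tendsto_rpow_neg_atTop hr').comp tendsto_natCast_atTop_atTop
    rwa [neg_sub] at h
  refine ⟨hO, squeeze_zero' ?_ ?_ (hO.trans_tendsto hlim)⟩
  · filter_upwards [hp] with n ⟨hp0, hp1⟩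
    exact hprob_nonneg hp0 hp1 _
  · filter_upwards [hp] with n ⟨hp0, hp1⟩
    exact hprob_one_le_le_hexp hp0 hp1 _

/-- For fixed `r ≥ 3` and `λ_n = C(n-1,k-1) p_n → λ ∈ (0,∞)`, the expected number of
star-collisions of support size `r` in `H(n,k,p_n)` is `O(n^{2-r})`, and hence
`P(X_r ≥ 1) → 0`. -/
theorem stmt18 (k : ℕ) (hk : 2 ≤ k) (r : ℕ) (hr : 3 ≤ r) (lam : ℝ) (hlam0 : 0 < lam)
    (p : ℕ → ℝ) (hp : ∀ᶠ n in atTop, 0 ≤ p n ∧ p n ≤ 1)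
    (hlam : Tendsto (fun n => ((n - 1).choose (k - 1) : ℝ) * p n) atTop (nhds lam)) :
    (fun n => hexp n k (p n) (fun E => (Xr n r E : ℝ)))
        =O[atTop] (fun n => (n : ℝ) ^ ((2 : ℝ) - r))
    ∧ Tendsto (fun n => hprob n k (p n) (fun E => 1 ≤ Xr n r E)) atTop (nhds 0) :=
  stmt18_general k hk r hr lam p hp hlam
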